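/- arXiv:1411.6296 — 2 statements merged into one kernel-verified Lean document; each statement's English description precedes it below -/
import Mathlib

section
/- Let A ∈ ℝ^{n²×n²} be PS-symmetric and define à ∈ ℝ^{n²×n²} by Ã(i₂+(j₂−1)n, i₁+(j₁−1)n) = A(i₁+(i₂−1)n, j₁+(j₂−1)n) for all 1 ≤ i₁,i₂,j₁,j₂ ≤ n. Then à is PS-symmetric: Ã = Ãᵀ and à = Π à Π. -/
open Matrix

/-- The perfect shuffle permutation matrix `Π_{n,n}` on `ℝ^{n²}`, where the index
`i+(j-1)n` of `ℝ^{n²}` is encoded as the pair `(i,j) : Fin n × Fin n`.  It is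
determined by `Π e_{(i,j)} = e_{(j,i)}`, i.e. `Π e_{i+(j−1)n} = e_{j+(i−1)n}`. -/
def perfectShuffle (n : ℕ) : Matrix (Fin n × Fin n) (Fin n × Fin n) ℝ :=
  Matrix.of fun p q => if p.1 = q.2 ∧ p.2 = q.1 then 1 else 0

/-
Conjugation by `Π` swaps the two tensor factors of both the row and the column index, so a
PS-symmetric `A` satisfies `A (i, j) (k, l) = A (j, i) (l, k)`. The rearrangement trades the
two symmetries of `A`: transposing `Ã` amounts to this swap in `A`, while conjugating `Ã` by `Π`
amounts to transposing `A`.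
-/

theorem perfectShuffle_eq_toMatrix_prodComm (n : ℕ) :
    perfectShuffle n = (Equiv.prodComm (Fin n) (Fin n)).toPEquiv.toMatrix := by
  ext p q
  simp [perfectShuffle, PEquiv.toMatrix_apply, Prod.ext_iff, eq_comm, and_comm]

theorem perfectShuffle_mul_mul_perfectShuffle (n : ℕ)
    (A : Matrix (Fin n × Fin n) (Fin n × Fin n) ℝ) :
    perfectShuffle n * A * perfectShuffle n = A.submatrix Prod.swap Prod.swap := by
  rw [perfectShuffle_eq_toMatrix_prodComm, PEquiv.toMatrix_toPEquiv_mul,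
    PEquiv.mul_toMatrix_toPEquiv, submatrix_submatrix]
  rfl

theorem eq_perfectShuffle_mul_mul_perfectShuffle_iff {n : ℕ}
    {A : Matrix (Fin n × Fin n) (Fin n × Fin n) ℝ} :
    A = perfectShuffle n * A * perfectShuffle n ↔
      ∀ i j k l : Fin n, A (i, j) (k, l) = A (j, i) (l, k) := by
  rw [perfectShuffle_mul_mul_perfectShuffle]
  exact ⟨fun h i j k l => congr_fun₂ h (i, j) (k, l), fun h => ext fun p q => h _ _ _ _⟩

theorem rearrangement_psSymmetric_general (n : ℕ)
    (A At : Matrix (Fin n × Fin n) (Fin n × Fin n) ℝ)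
    (hsym : A = Aᵀ) (hps : A = perfectShuffle n * A * perfectShuffle n)
    (hAt : ∀ i₁ i₂ j₁ j₂ : Fin n, At (i₂, j₂) (i₁, j₁) = A (i₁, i₂) (j₁, j₂)) :
    At = Atᵀ ∧ At = perfectShuffle n * At * perfectShuffle n := by
  have hswap := eq_perfectShuffle_mul_mul_perfectShuffle_iff.mp hps
  refine ⟨?_, eq_perfectShuffle_mul_mul_perfectShuffle_iff.mpr fun i₂ j₂ i₁ j₁ => ?_⟩
  · ext ⟨i₂, j₂⟩ ⟨i₁, j₁⟩
    rw [transpose_apply, hAt, hAt, hswap]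
  · rw [hAt, hAt]
    exact congr_fun₂ hsym _ _

/-- if `A` is PS-symmetric and `Ã` is its rearrangement
`Ã(i₂+(j₂−1)n, i₁+(j₁−1)n) = A(i₁+(i₂−1)n, j₁+(j₂−1)n)`, then `Ã` is also
PS-symmetric. -/
theorem rearrangement_psSymmetric (n : ℕ) (hn : 0 < n)
    (A At : Matrix (Fin n × Fin n) (Fin n × Fin n) ℝ)
    (hsym : A = Aᵀ) (hps : A = perfectShuffle n * A * perfectShuffle n)
    (hAt : ∀ i₁ i₂ j₁ j₂ : Fin n, At (i₂, j₂) (i₁, j₁) = A (i₁, i₂) (j₁, j₂)) :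
    At = Atᵀ ∧ At = perfectShuffle n * At * perfectShuffle n :=
  rearrangement_psSymmetric_general n A At hsym hps hAt
end

section
/- If A ∈ ℝ^{n²×n²} is PS-symmetric and positive semidefinite, then there exist matrices Y₊ ∈ ℝ^{n²×(n(n+1)/2)} and Y₋ ∈ ℝ^{n²×(n(n−1)/2)} such that Π Y₊ = Y₊, Π Y₋ = −Y₋, and A = Y₊Y₊ᵀ + Y₋Y₋ᵀ. In particular, A is a sum of rank-one matrices y yᵀ each of which is itself PS-symmetric. -/
open Matrix

/-!
Since `Π² = 1` and `Π A Π = A`, the matrix `A` splits as `Q₊ A Q₊ + Q₋ A Q₋` with the symmetric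
projections `Q± = (1 ± Π)/2` onto the `±1`-eigenspaces of `Π`. If the columns of `E` span the
range of `Q±`, then `Q± = E F` for some `F`, and `Q± A Q±ᵀ = (E S)(E S)ᵀ` for any Gram factor
`S Sᵀ = F A Fᵀ` of the positive semidefinite `F A Fᵀ`. For `Q₊` take the indicator vectors of
the unordered pairs `{(i, j), (j, i)}` (`n(n+1)/2` of them), for `Q₋` the vectors
`e_{(i,j)} − e_{(j,i)}` with `i < j` (`n(n−1)/2` of them). Every column `y` of `E S` then
satisfies `Π y = ±y`, so `y yᵀ` is PS-symmetric.
-/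

namespace Matrix

variable {m ι κ : Type*} [Fintype m] [Fintype ι] [DecidableEq ι] [Fintype κ]

theorem PosSemidef.exists_mul_mul_transpose_eq {A : Matrix m m ℝ} (hA : A.PosSemidef)
    (E : Matrix m ι ℝ) (F : Matrix ι m ℝ) (e : ι ≃ κ) :
    ∃ S : Matrix ι κ ℝ, E * F * A * (E * F)ᵀ = E * S * (E * S)ᵀ := by
  open scoped MatrixOrder in
  obtain ⟨B, hB⟩ := CStarAlgebra.nonneg_iff_eq_star_mul_self.mp
    (hA.mul_mul_conjTranspose_same F).nonneg
  set S := Bᵀ.submatrix id e.symm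
  have hS : S * Sᵀ = F * A * Fᵀ := by
    rw [transpose_submatrix, submatrix_mul_equiv, submatrix_id_id, transpose_transpose]
    simpa [star_eq_conjTranspose] using hB.symm
  refine ⟨S, ?_⟩
  simp only [transpose_mul, Matrix.mul_assoc] at hS ⊢
  rw [← Matrix.mul_assoc S, hS]
  simp only [Matrix.mul_assoc]

end Matrix

variable {n : ℕ} {κ : Type*}

theorem perfectShuffle_apply (p q : Fin n × Fin n) :
    perfectShuffle n p q = if p.swap = q then 1 else 0 := by
  simp only [perfectShuffle, of_apply, Prod.ext_iff, Prod.fst_swap, Prod.snd_swap, and_comm]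

theorem perfectShuffle_mul_apply (M : Matrix (Fin n × Fin n) κ ℝ) (p : Fin n × Fin n) (k : κ) :
    (perfectShuffle n * M) p k = M p.swap k := by
  simp [mul_apply, perfectShuffle_apply]

theorem perfectShuffle_transpose : (perfectShuffle n)ᵀ = perfectShuffle n := by
  ext p q
  simp only [transpose_apply, perfectShuffle_apply, @eq_comm _ q.swap, Prod.swap_eq_iff_eq_swap]

theorem mul_perfectShuffle_apply (M : Matrix κ (Fin n × Fin n) ℝ) (k : κ) (q : Fin n × Fin n) :
    (M * perfectShuffle n) k q = M k q.swap := by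
  rw [← transpose_apply (M * _), transpose_mul, perfectShuffle_transpose,
    perfectShuffle_mul_apply, transpose_apply]

theorem perfectShuffle_mul_self : perfectShuffle n * perfectShuffle n = 1 := by
  ext p q
  rw [perfectShuffle_mul_apply, perfectShuffle_apply, Prod.swap_swap, one_apply]

noncomputable def symProj (n : ℕ) : Matrix (Fin n × Fin n) (Fin n × Fin n) ℝ :=
  (2⁻¹ : ℝ) • (1 + perfectShuffle n)

noncomputable def antiProj (n : ℕ) : Matrix (Fin n × Fin n) (Fin n × Fin n) ℝ :=
  (2⁻¹ : ℝ) • (1 - perfectShuffle n)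

theorem perfectShuffle_mul_symProj : perfectShuffle n * symProj n = symProj n := by
  rw [symProj, mul_smul_comm, mul_add, mul_one, perfectShuffle_mul_self, add_comm]

theorem perfectShuffle_mul_antiProj : perfectShuffle n * antiProj n = -antiProj n := by
  rw [antiProj, mul_smul_comm, mul_sub, mul_one, perfectShuffle_mul_self, ← smul_neg, neg_sub]

theorem symProj_transpose : (symProj n)ᵀ = symProj n := by
  rw [symProj, transpose_smul, transpose_add, transpose_one, perfectShuffle_transpose]

theorem antiProj_transpose : (antiProj n)ᵀ = antiProj n := by
  rw [antiProj, transpose_smul, transpose_sub, transpose_one, perfectShuffle_transpose]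

theorem symProj_mul_mul_symProj_add_antiProj_mul_mul_antiProj
    {A : Matrix (Fin n × Fin n) (Fin n × Fin n) ℝ}
    (hA : perfectShuffle n * A * perfectShuffle n = A) :
    symProj n * A * symProj n + antiProj n * A * antiProj n = A := by
  unfold symProj antiProj
  set P := perfectShuffle n
  have hsum : (1 + P) * A * (1 + P) + (1 - P) * A * (1 - P) = (2 : ℝ) • (A + P * A * P) := by
    simp only [add_mul, mul_add, sub_mul, mul_sub, one_mul, mul_one, two_smul]
    abel
  simp only [smul_mul_assoc, mul_smul_comm, smul_smul, ← smul_add, hsum, hA]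
  match_scalars
  norm_num

section PairSign

variable {α : Type*} [LinearOrder α]

def pairSign (p : α × α) : ℝ := if p.1 < p.2 then 1 else -1

theorem pairSign_swap {p : α × α} (hp : p.1 ≠ p.2) : pairSign p.swap = -pairSign p := by
  rcases hp.lt_or_gt with h | h <;> simp [pairSign, h, h.not_gt]

theorem pairSign_mul_self (p : α × α) : pairSign p * pairSign p = 1 := by
  unfold pairSign
  split_ifs <;> norm_num

end PairSign

noncomputable def symBasis (n : ℕ) : Matrix (Fin n × Fin n) (Sym2 (Fin n)) ℝ :=
  of fun p s => if s(p.1, p.2) = s then 1 else 0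

noncomputable def antiBasis (n : ℕ) :
    Matrix (Fin n × Fin n) {s : Sym2 (Fin n) // ¬s.IsDiag} ℝ :=
  of fun p s => if s(p.1, p.2) = s.val then pairSign p else 0

theorem card_sym2_fin : Fintype.card (Sym2 (Fin n)) = n * (n + 1) / 2 := by
  rw [Sym2.card, Fintype.card_fin, Nat.choose_two_right, Nat.add_sub_cancel, Nat.mul_comm]

theorem card_sym2_fin_not_isDiag :
    Fintype.card {s : Sym2 (Fin n) // ¬s.IsDiag} = n * (n - 1) / 2 := by
  rw [Sym2.card_subtype_not_diag, Fintype.card_fin, Nat.choose_two_right]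

theorem perfectShuffle_mul_symBasis : perfectShuffle n * symBasis n = symBasis n := by
  ext p s
  rw [perfectShuffle_mul_apply, symBasis, of_apply, of_apply, Prod.fst_swap, Prod.snd_swap,
    Sym2.eq_swap]

theorem perfectShuffle_mul_antiBasis : perfectShuffle n * antiBasis n = -antiBasis n := by
  ext p s
  rw [perfectShuffle_mul_apply, neg_apply, antiBasis, of_apply, of_apply, Prod.fst_swap,
    Prod.snd_swap, Sym2.eq_swap]
  split_ifs with h
  · exact pairSign_swap fun hp => s.2 (h ▸ Sym2.mk_isDiag_iff.mpr hp)
  · exact neg_zero.symm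

theorem apply_eq_zero_of_perfectShuffle_mul_eq_neg {M : Matrix (Fin n × Fin n) κ ℝ}
    (hM : perfectShuffle n * M = -M) {p : Fin n × Fin n} (hp : p.1 = p.2) (k : κ) :
    M p k = 0 := by
  have h := perfectShuffle_mul_apply M p k
  rw [hM, neg_apply, show p.swap = p from Prod.ext hp.symm hp] at h
  linarith

theorem exists_symBasis_mul_eq {M : Matrix (Fin n × Fin n) κ ℝ}
    (hM : perfectShuffle n * M = M) : ∃ F : Matrix (Sym2 (Fin n)) κ ℝ, symBasis n * F = M := by
  have hsymm (i j : Fin n) (k : κ) : M (i, j) k = M (j, i) k := by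
    simpa [hM] using (perfectShuffle_mul_apply M (j, i) k).symm
  refine ⟨of fun s k => Sym2.lift ⟨fun i j => M (i, j) k, fun i j => hsymm i j k⟩ s, ?_⟩
  ext p k
  simp [symBasis, mul_apply]

theorem exists_antiBasis_mul_eq {M : Matrix (Fin n × Fin n) κ ℝ}
    (hM : perfectShuffle n * M = -M) :
    ∃ F : Matrix {s : Sym2 (Fin n) // ¬s.IsDiag} κ ℝ, antiBasis n * F = M := by
  have hanti (i j : Fin n) (k : κ) : M (j, i) k = -M (i, j) k := by
    simpa [hM] using (perfectShuffle_mul_apply M (i, j) k).symm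
  have hsymm (i j : Fin n) (k : κ) :
      pairSign (i, j) * M (i, j) k = pairSign (j, i) * M (j, i) k := by
    rcases eq_or_ne i j with rfl | h
    · rfl
    · rw [hanti i j k, show (j, i) = (i, j).swap from rfl, pairSign_swap h, neg_mul_neg]
  refine ⟨of fun s k =>
    Sym2.lift ⟨fun i j => pairSign (i, j) * M (i, j) k, fun i j => hsymm i j k⟩ s.val, ?_⟩
  ext p k
  rw [mul_apply]
  by_cases hp : p.1 = p.2
  · rw [apply_eq_zero_of_perfectShuffle_mul_eq_neg hM hp]
    refine Finset.sum_eq_zero fun s _ => ?_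
    have hs : s(p.1, p.2) ≠ s.val := fun h => s.2 (h ▸ Sym2.mk_isDiag_iff.mpr hp)
    rw [antiBasis, of_apply, if_neg hs, zero_mul]
  · rw [Fintype.sum_eq_single ⟨s(p.1, p.2), hp⟩]
    · simp [antiBasis, ← mul_assoc, pairSign_mul_self]
    · intro s hs
      rw [antiBasis, of_apply, if_neg (fun h => hs (Subtype.ext h.symm)), zero_mul]

theorem vecMulVec_col_psSymmetric {Y : Matrix (Fin n × Fin n) κ ℝ} {ε : ℝ} (hε : ε * ε = 1)
    (hY : perfectShuffle n * Y = ε • Y) (j : κ) :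
    (vecMulVec (Yᵀ j) (Yᵀ j))ᵀ = vecMulVec (Yᵀ j) (Yᵀ j) ∧
      vecMulVec (Yᵀ j) (Yᵀ j) =
        perfectShuffle n * vecMulVec (Yᵀ j) (Yᵀ j) * perfectShuffle n := by
  have hcol (p : Fin n × Fin n) : Y p.swap j = ε * Y p j := by
    rw [← perfectShuffle_mul_apply Y p j, hY, Matrix.smul_apply, smul_eq_mul]
  refine ⟨transpose_vecMulVec _ _, ?_⟩
  ext p q
  rw [mul_perfectShuffle_apply, perfectShuffle_mul_apply]
  simp only [vecMulVec_apply, transpose_apply, hcol]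
  linear_combination (-(Y p j * Y q j)) * hε

theorem psSymmetric_posSemidef_structured_factorization_general (n : ℕ)
    (A : Matrix (Fin n × Fin n) (Fin n × Fin n) ℝ)
    (hps : A = perfectShuffle n * A * perfectShuffle n)
    (hpsd : A.PosSemidef) :
    ∃ (Yp : Matrix (Fin n × Fin n) (Fin (n * (n + 1) / 2)) ℝ)
      (Ym : Matrix (Fin n × Fin n) (Fin (n * (n - 1) / 2)) ℝ),
      perfectShuffle n * Yp = Yp ∧
      perfectShuffle n * Ym = -Ym ∧
      A = Yp * Ypᵀ + Ym * Ymᵀ ∧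
      (∀ j, (vecMulVec (Ypᵀ j) (Ypᵀ j))ᵀ = vecMulVec (Ypᵀ j) (Ypᵀ j) ∧
        vecMulVec (Ypᵀ j) (Ypᵀ j) =
          perfectShuffle n * vecMulVec (Ypᵀ j) (Ypᵀ j) * perfectShuffle n) ∧
      (∀ j, (vecMulVec (Ymᵀ j) (Ymᵀ j))ᵀ = vecMulVec (Ymᵀ j) (Ymᵀ j) ∧
        vecMulVec (Ymᵀ j) (Ymᵀ j) =
          perfectShuffle n * vecMulVec (Ymᵀ j) (Ymᵀ j) * perfectShuffle n) := by
  obtain ⟨Fp, hFp⟩ := exists_symBasis_mul_eq (perfectShuffle_mul_symProj (n := n))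
  obtain ⟨Fm, hFm⟩ := exists_antiBasis_mul_eq (perfectShuffle_mul_antiProj (n := n))
  obtain ⟨Sp, hSp⟩ := hpsd.exists_mul_mul_transpose_eq (symBasis n) Fp
    (Fintype.equivFinOfCardEq card_sym2_fin)
  obtain ⟨Sm, hSm⟩ := hpsd.exists_mul_mul_transpose_eq (antiBasis n) Fm
    (Fintype.equivFinOfCardEq card_sym2_fin_not_isDiag)
  have hYp : perfectShuffle n * (symBasis n * Sp) = symBasis n * Sp := by
    rw [← Matrix.mul_assoc, perfectShuffle_mul_symBasis]
  have hYm : perfectShuffle n * (antiBasis n * Sm) = -(antiBasis n * Sm) := by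
    rw [← Matrix.mul_assoc, perfectShuffle_mul_antiBasis, Matrix.neg_mul]
  refine ⟨_, _, hYp, hYm, ?_,
    vecMulVec_col_psSymmetric (one_mul 1) (by rwa [one_smul]),
    vecMulVec_col_psSymmetric (ε := -1) (by norm_num) (by rwa [neg_one_smul])⟩
  rw [← hSp, ← hSm, hFp, hFm, symProj_transpose, antiProj_transpose,
    symProj_mul_mul_symProj_add_antiProj_mul_mul_antiProj hps.symm]

/-- a positive semidefinite PS-symmetric `A` can be written as
`A = Y₊Y₊ᵀ + Y₋Y₋ᵀ` with `Π Y₊ = Y₊` (n(n+1)/2 columns) and `Π Y₋ = −Y₋`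
(n(n−1)/2 columns); in particular `A` is the sum of the rank-one matrices
`y yᵀ` built from the columns `y` of `Y₊` and `Y₋`, each of which is itself
PS-symmetric. -/
theorem psSymmetric_posSemidef_structured_factorization (n : ℕ) (hn : 0 < n)
    (A : Matrix (Fin n × Fin n) (Fin n × Fin n) ℝ)
    (hps : A = perfectShuffle n * A * perfectShuffle n)
    (hpsd : A.PosSemidef) :
    ∃ (Yp : Matrix (Fin n × Fin n) (Fin (n * (n + 1) / 2)) ℝ)
      (Ym : Matrix (Fin n × Fin n) (Fin (n * (n - 1) / 2)) ℝ),
      perfectShuffle n * Yp = Yp ∧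
      perfectShuffle n * Ym = -Ym ∧
      A = Yp * Ypᵀ + Ym * Ymᵀ ∧
      (∀ j, (vecMulVec (Ypᵀ j) (Ypᵀ j))ᵀ = vecMulVec (Ypᵀ j) (Ypᵀ j) ∧
        vecMulVec (Ypᵀ j) (Ypᵀ j) =
          perfectShuffle n * vecMulVec (Ypᵀ j) (Ypᵀ j) * perfectShuffle n) ∧
      (∀ j, (vecMulVec (Ymᵀ j) (Ymᵀ j))ᵀ = vecMulVec (Ymᵀ j) (Ymᵀ j) ∧
        vecMulVec (Ymᵀ j) (Ymᵀ j) =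
          perfectShuffle n * vecMulVec (Ymᵀ j) (Ymᵀ j) * perfectShuffle n) :=
  psSymmetric_posSemidef_structured_factorization_general n A hps hpsd
end
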